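/- The ~-closure of a prefix-closed language need not be prefix-closed: there is a language L (e.g. the prefix closure of {x₁/(y₁,y₂) x₁/(y₁,-)}) such that its closure under ~ contains a trace some of whose prefixes are not in the closure. -/

import Mathlib

/-- Events for the example: `x₁`, `y₁` at port 1 and `y₂` at port 2. -/
inductive Ev where
  | x1 | y1 | y2
deriving DecidableEq

/-- The port of each event. -/
def Ev.port : Ev → Fin 2
  | .x1 => 0
  | .y1 => 0
  | .y2 => 1

def proj (p : Fin 2) (σ : List Ev) : List Ev :=
  σ.filter (fun a => a.port = p)

def traceEquiv (σ σ' : List Ev) : Prop :=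
  ∀ p : Fin 2, proj p σ = proj p σ'

/-- `L`: the (transition-level) prefix closure of the single global trace
`x₁/(y₁,y₂) x₁/(y₁,-)`, written as event sequences. -/
def L : Set (List Ev) :=
  {[], [Ev.x1, Ev.y1, Ev.y2], [Ev.x1, Ev.y1, Ev.y2, Ev.x1, Ev.y1]}

/-- The `~`-closure of `L`. -/
def closL : Set (List Ev) := {σ | ∃ σ' ∈ L, traceEquiv σ σ'}

/-! Every event lies on exactly one of the two ports, so `~` preserves length; the trace
`x₁/(y₁,-)` has length 2, while `L`, hence its closure, only has traces of lengths 0, 3 and 5.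
The trace `x₁/(y₁,-) x₁/(y₁,y₂)` lies in the closure because moving the port-2 event `y₂` past
port-1 events changes no projection. -/

theorem length_eq_length_proj_add (σ : List Ev) :
    σ.length = (proj 0 σ).length + (proj 1 σ).length := by
  have hport : ∀ a ∈ σ,
      decide (a.port = 1) = true ↔ decide (¬ decide (a.port = 0) = true) = true := by
    intro a _; cases a <;> decide
  rw [proj, proj, ← List.countP_eq_length_filter, ← List.countP_eq_length_filter,
    List.countP_congr hport, ← List.length_eq_countP_add_countP]

theorem traceEquiv.length_eq {σ σ' : List Ev} (h : traceEquiv σ σ') :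
    σ.length = σ'.length := by
  rw [length_eq_length_proj_add σ, length_eq_length_proj_add σ', h 0, h 1]

theorem length_of_mem_closL {σ : List Ev} (hσ : σ ∈ closL) :
    σ.length = 0 ∨ σ.length = 3 ∨ σ.length = 5 := by
  obtain ⟨σ', hσ', h⟩ := hσ
  rw [h.length_eq]
  rcases hσ' with rfl | rfl | rfl <;> simp

theorem traceEquiv_delay_y2 :
    traceEquiv [Ev.x1, Ev.y1, Ev.x1, Ev.y1, Ev.y2] [Ev.x1, Ev.y1, Ev.y2, Ev.x1, Ev.y1] := by
  unfold traceEquiv; decide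

/-- the `~`-closure of the prefix-closed language `L` is not prefix
closed: it contains the trace `x₁/(y₁,-) x₁/(y₁,y₂)` whose prefix `x₁/(y₁,-)` is
not in the closure. -/
theorem closure_not_prefix_closed :
    [Ev.x1, Ev.y1, Ev.x1, Ev.y1, Ev.y2] ∈ closL ∧
    [Ev.x1, Ev.y1] <+: [Ev.x1, Ev.y1, Ev.x1, Ev.y1, Ev.y2] ∧
    [Ev.x1, Ev.y1] ∉ closL := by
  refine ⟨⟨_, Or.inr (Or.inr rfl), traceEquiv_delay_y2⟩, ⟨[Ev.x1, Ev.y1, Ev.y2], rfl⟩, ?_⟩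
  intro h
  simpa using length_of_mem_closL h
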